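/- arXiv:2002.05859 — 8 statements merged into one kernel-verified Lean document; each statement's English description precedes it below -/
import Mathlib

section
/- Let V be an n-dimensional vector space over 𝔽_q and let ℱ be an intersecting family of m-dimensional subspaces of V. If S is an s-dimensional subspace of V such that some F ∈ ℱ satisfies F ∩ S = 0, then there exists an (s+1)-dimensional subspace T of V such that |ℱ_T| ≥ |ℱ_S| / [m over 1]_q. -/
/-!
Let `A ∈ ℱ` miss `S`. Every `G ∈ ℱ` containing `S` meets `A`, so it contains at least `q - 1`
of the `q ^ m - 1` nonzero vectors of `A`. Double counting incidences between `ℱ_S` and the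
nonzero vectors of `A` yields a nonzero `v ∈ A` lying in at least `|ℱ_S| (q - 1) / (q ^ m - 1)`
members of `ℱ_S`; these are exactly the members of `ℱ_T` for `T = S ⊔ ⟨v⟩`, and `dim T = s + 1`
because `v ∉ S`.
-/

open Module

/-- The Gaussian binomial coefficient `[n over m]_q`, as a rational number. -/
def gaussBinom (q n m : ℕ) : ℚ :=
  ∏ i ∈ Finset.range m, ((q : ℚ) ^ (n - i) - 1) / ((q : ℚ) ^ (m - i) - 1)

/-- A family of subspaces is intersecting if any two of its members have intersection
of dimension at least 1. -/
def IsIntersectingFamily {F V : Type*} [Field F] [AddCommGroup V] [Module F V]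
    (𝒜 : Set (Submodule F V)) : Prop :=
  ∀ A ∈ 𝒜, ∀ B ∈ 𝒜, 1 ≤ finrank F ↥(A ⊓ B)

/-- The covering number of a family of subspaces: the minimum dimension of a subspace
intersecting every member of the family. -/
noncomputable def coveringNumber {F V : Type*} [Field F] [AddCommGroup V] [Module F V]
    (𝒜 : Set (Submodule F V)) : ℕ :=
  sInf { d : ℕ | ∃ W : Submodule F V, finrank F ↥W = d ∧ ∀ A ∈ 𝒜, 1 ≤ finrank F ↥(W ⊓ A) }

open Finset

theorem gaussBinom_one (q m : ℕ) : gaussBinom q m 1 = ((q : ℚ) ^ m - 1) / ((q : ℚ) - 1) := by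
  simp [gaussBinom]

namespace Submodule

open scoped Classical

variable {F V : Type*} [Field F] [Fintype F] [AddCommGroup V] [Module F V] [Fintype V]

theorem card_filter_mem_ne_zero_add_one (W : Submodule F V) :
    #{v | v ∈ W ∧ v ≠ 0} + 1 = Fintype.card F ^ finrank F W := by
  have hfilter : ({v | v ∈ W ∧ v ≠ 0} : Finset V) = ({v | v ∈ W} : Finset V).erase 0 := by
    ext v
    simp [and_comm]
  rw [hfilter, card_erase_add_one (by simp), ← card_eq_pow_finrank (V := W),
    ← Fintype.card_subtype]

theorem card_sub_one_le_card_filter_mem_ne_zero {W : Submodule F V} (hW : W ≠ ⊥) :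
    (Fintype.card F : ℚ) - 1 ≤ #{v | v ∈ W ∧ v ≠ 0} := by
  have hcard : (#{v | v ∈ W ∧ v ≠ 0} : ℚ) + 1 = (Fintype.card F : ℚ) ^ finrank F W := by
    exact_mod_cast W.card_filter_mem_ne_zero_add_one
  have hpow : (Fintype.card F : ℚ) ≤ (Fintype.card F : ℚ) ^ finrank F W :=
    le_self_pow₀ (by exact_mod_cast Fintype.card_pos)
      (Nat.one_le_iff_ne_zero.mp (one_le_finrank_iff.mpr hW))
  linarith

theorem exists_mem_ne_zero_card_mul_le (A : Submodule F V) (hA : A ≠ ⊥)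
    (𝒢 : Finset (Submodule F V)) (h𝒢 : ∀ G ∈ 𝒢, A ⊓ G ≠ ⊥) :
    ∃ v ∈ A, v ≠ 0 ∧ #𝒢 * ((Fintype.card F : ℚ) - 1) ≤
      ((Fintype.card F : ℚ) ^ finrank F A - 1) * #{G ∈ 𝒢 | v ∈ G} := by
  set X : Finset V := {v | v ∈ A ∧ v ≠ 0}
  have hX : (#X : ℚ) = (Fintype.card F : ℚ) ^ finrank F A - 1 := by
    rw [eq_sub_iff_add_eq]
    exact_mod_cast A.card_filter_mem_ne_zero_add_one
  obtain ⟨w, hwA, hw0⟩ := (Submodule.ne_bot_iff A).mp hA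
  obtain ⟨v, hvX, hvmax⟩ :=
    X.exists_max_image (fun v ↦ #{G ∈ 𝒢 | v ∈ G}) ⟨w, by simp [X, hwA, hw0]⟩
  have hv : v ∈ A ∧ v ≠ 0 := by simpa [X] using hvX
  refine ⟨v, hv.1, hv.2, ?_⟩
  rw [← hX]
  simp only [← nsmul_eq_mul]
  refine card_nsmul_le_card_nsmul (fun (G : Submodule F V) (v : V) ↦ v ∈ G)
    (fun G hG ↦ ?_) (fun w hw ↦ ?_)
  · calc ((Fintype.card F : ℚ) - 1) ≤ #{w | w ∈ A ⊓ G ∧ w ≠ 0} :=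
          card_sub_one_le_card_filter_mem_ne_zero (h𝒢 G hG)
      _ ≤ #(X.bipartiteAbove (fun G v ↦ v ∈ G) G) := by
          gcongr
          intro w
          simp +contextual [X, bipartiteAbove]
  · exact_mod_cast hvmax w hw

end Submodule

theorem stmt2_general {F V : Type*} [Field F] [Fintype F] [AddCommGroup V] [Module F V]
    [FiniteDimensional F V] {q m s : ℕ} (hq : Fintype.card F = q)
    (ℱ : Set (Submodule F V)) (hdim : ∀ A ∈ ℱ, finrank F ↥A = m)
    (hint : IsIntersectingFamily ℱ)
    (S : Submodule F V) (hS : finrank F ↥S = s)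
    (hmiss : ∃ A ∈ ℱ, finrank F ↥(A ⊓ S) = 0) :
    ∃ T : Submodule F V, finrank F ↥T = s + 1 ∧
      ({G | G ∈ ℱ ∧ S ≤ G}.ncard : ℚ) / gaussBinom q m 1 ≤
        ({G | G ∈ ℱ ∧ T ≤ G}.ncard : ℚ) := by
  classical
  have : Finite V := Module.finite_of_finite F
  have : Fintype V := Fintype.ofFinite V
  obtain ⟨A, hA, hAS⟩ := hmiss
  have hA0 : A ≠ ⊥ := Submodule.one_le_finrank_iff.mp (by simpa using hint A hA A hA)
  set 𝒢 := {G | G ∈ ℱ ∧ S ≤ G}.toFinset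
  obtain ⟨v, hvA, hv0, hcount⟩ := A.exists_mem_ne_zero_card_mul_le hA0 𝒢
    (fun G hG ↦ Submodule.one_le_finrank_iff.mp (hint A hA G (Set.mem_toFinset.mp hG).1))
  have hvS : v ∉ S := fun hvS ↦ hv0 <| by
    simpa [Submodule.finrank_eq_zero.mp hAS] using Submodule.mem_inf.mpr ⟨hvA, hvS⟩
  refine ⟨S ⊔ Submodule.span F {v}, by rw [Submodule.finrank_sup_span_singleton hvS, hS], ?_⟩
  have hT : {G | G ∈ ℱ ∧ S ⊔ Submodule.span F {v} ≤ G} = ↑({G ∈ 𝒢 | v ∈ G}) := by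
    ext G
    simp [𝒢, Submodule.span_singleton_le_iff_mem, and_assoc]
  have hq1 : (1 : ℚ) < q := by exact_mod_cast hq ▸ Fintype.one_lt_card
  have hqm : (1 : ℚ) < (q : ℚ) ^ m := one_lt_pow₀ hq1 (by
    rw [← hdim A hA]; exact Nat.one_le_iff_ne_zero.mp (Submodule.one_le_finrank_iff.mpr hA0))
  rw [Set.ncard_eq_toFinset_card', hT, Set.ncard_coe_finset, gaussBinom_one, div_div_eq_mul_div,
    div_le_iff₀ (by linarith)]
  rw [hq, hdim A hA] at hcount
  linarith

theorem stmt2 {F V : Type*} [Field F] [Fintype F] [AddCommGroup V] [Module F V]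
    [FiniteDimensional F V] {q m n s : ℕ} (hq : Fintype.card F = q) (hV : finrank F V = n)
    (ℱ : Set (Submodule F V)) (hdim : ∀ A ∈ ℱ, finrank F ↥A = m)
    (hint : IsIntersectingFamily ℱ)
    (S : Submodule F V) (hS : finrank F ↥S = s)
    (hmiss : ∃ A ∈ ℱ, finrank F ↥(A ⊓ S) = 0) :
    ∃ T : Submodule F V, finrank F ↥T = s + 1 ∧
      ({G | G ∈ ℱ ∧ S ≤ G}.ncard : ℚ) / gaussBinom q m 1 ≤
        ({G | G ∈ ℱ ∧ T ≤ G}.ncard : ℚ) :=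
  stmt2_general hq ℱ hdim hint S hS hmiss
end

section
/- Let V be an n-dimensional vector space over 𝔽_q and let ℱ be an intersecting family of m-dimensional subspaces of V with covering number τ(ℱ) = m. Suppose s ≤ t ≤ m. Then for any s-dimensional subspace S of V there exists a t-dimensional subspace T of V such that |ℱ_S| ≤ [m over 1]_q^{t−s} · |ℱ_T|. Moreover, |ℱ_S| ≤ [m over 1]_q^{m−s}. -/
/-! A subspace `S` of dimension below `τ(ℱ) = m` misses some `W ∈ ℱ`. Every member of `ℱ` containing
`S` meets `W`, hence contains one of the `[m over 1]_q` points of `W`, so by pigeonhole adjoining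
the most popular point to `S` shrinks `|ℱ_S|` by at most that factor. Iterating reaches dimension
`t`; at dimension `m` the family `ℱ_T` has at most one member. -/

open Module

lemma gaussBinom_one_eq_geom_sum {q : ℕ} (hq : q ≠ 1) (m : ℕ) :
    gaussBinom q m 1 = ∑ i ∈ Finset.range m, (q : ℚ) ^ i := by
  rw [geom_sum_eq (by exact_mod_cast hq)]
  simp [gaussBinom]

open scoped LinearAlgebra.Projectivization

section

variable {K V : Type*} [Field K] [AddCommGroup V] [Module K V]

lemma exists_inf_eq_bot_of_finrank_lt_coveringNumber [FiniteDimensional K V]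
    {ℱ : Set (Submodule K V)} {S : Submodule K V} (hS : finrank K S < coveringNumber ℱ) :
    ∃ W ∈ ℱ, S ⊓ W = ⊥ := by
  by_contra! h
  refine hS.not_ge (Nat.sInf_le ⟨S, rfl, fun A hA => ?_⟩)
  exact Submodule.one_le_finrank_iff.mpr (h A hA)

lemma IsIntersectingFamily.ne_bot {ℱ : Set (Submodule K V)} (hℱ : IsIntersectingFamily ℱ)
    {A : Submodule K V} (hA : A ∈ ℱ) : A ≠ ⊥ := by
  rintro rfl
  simpa using hℱ ⊥ hA ⊥ hA

lemma ncard_setOf_mem_and_le_le_one [FiniteDimensional K V] {m : ℕ} {ℱ : Set (Submodule K V)}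
    (hdim : ∀ A ∈ ℱ, finrank K A = m) {T : Submodule K V} (hT : finrank K T = m) :
    {G | G ∈ ℱ ∧ T ≤ G}.ncard ≤ 1 := by
  have hsub : {G | G ∈ ℱ ∧ T ≤ G} ⊆ {T} := fun G ⟨hGℱ, hTG⟩ =>
    (Submodule.eq_of_le_of_finrank_le hTG (by rw [hdim G hGℱ, hT])).symm
  exact (Set.ncard_le_ncard hsub (Set.finite_singleton T)).trans (Set.ncard_singleton T).le

lemma exists_point_ncard_le_card_mul [Finite K] [FiniteDimensional K V] {W : Submodule K V}
    (hW : W ≠ ⊥) {𝒜 : Set (Submodule K V)} (h𝒜 : ∀ G ∈ 𝒜, W ⊓ G ≠ ⊥) :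
    ∃ p : ℙ K W, 𝒜.ncard ≤ Nat.card (ℙ K W) * {G ∈ 𝒜 | (p.rep : V) ∈ G}.ncard := by
  have : Finite W := Module.finite_of_finite K
  have : Fintype (ℙ K W) := Fintype.ofFinite _
  obtain ⟨w, hwW, hw0⟩ := (Submodule.ne_bot_iff W).mp hW
  have : Nonempty (ℙ K W) :=
    ⟨Projectivization.mk K ⟨w, hwW⟩ (by simpa using hw0)⟩
  obtain ⟨p, hp⟩ := Finite.exists_max fun p : ℙ K W => {G ∈ 𝒜 | (p.rep : V) ∈ G}.ncard
  refine ⟨p, ?_⟩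
  have hcover : 𝒜 = ⋃ p : ℙ K W, {G ∈ 𝒜 | (p.rep : V) ∈ G} := by
    refine (Set.iUnion_subset fun _ => Set.sep_subset _ _).antisymm' fun G hG => ?_
    obtain ⟨v, ⟨hvW, hvG⟩, hv0⟩ := (Submodule.ne_bot_iff _).mp (h𝒜 G hG)
    have hv0' : (⟨v, hvW⟩ : W) ≠ 0 := by simpa using hv0
    obtain ⟨a, ha⟩ := Projectivization.exists_smul_eq_mk_rep K _ hv0'
    refine Set.mem_iUnion.mpr ⟨Projectivization.mk K _ hv0', hG, ?_⟩
    rw [← ha]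
    exact G.smul_mem a hvG
  calc 𝒜.ncard ≤ ∑ p : ℙ K W, {G ∈ 𝒜 | (p.rep : V) ∈ G}.ncard :=
        (congrArg Set.ncard hcover).trans_le (Set.ncard_iUnion_le_of_fintype _)
    _ ≤ Finset.univ.card • {G ∈ 𝒜 | (p.rep : V) ∈ G}.ncard :=
        Finset.sum_le_card_nsmul _ _ _ fun q _ => hp q
    _ = Nat.card (ℙ K W) * {G ∈ 𝒜 | (p.rep : V) ∈ G}.ncard := by
        rw [smul_eq_mul, Finset.card_univ, Nat.card_eq_fintype_card]

variable [Finite K] [FiniteDimensional K V] {m : ℕ} {ℱ : Set (Submodule K V)}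

lemma exists_finrank_succ_ncard_le (hdim : ∀ A ∈ ℱ, finrank K A = m)
    (hℱ : IsIntersectingFamily ℱ) {S : Submodule K V} (hS : finrank K S < coveringNumber ℱ) :
    ∃ S' : Submodule K V, finrank K S' = finrank K S + 1 ∧
      {G | G ∈ ℱ ∧ S ≤ G}.ncard ≤
        (∑ i ∈ Finset.range m, Nat.card K ^ i) * {G | G ∈ ℱ ∧ S' ≤ G}.ncard := by
  obtain ⟨W, hWℱ, hSW⟩ := exists_inf_eq_bot_of_finrank_lt_coveringNumber hS
  obtain ⟨p, hp⟩ := exists_point_ncard_le_card_mul (hℱ.ne_bot hWℱ)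
    (𝒜 := {G | G ∈ ℱ ∧ S ≤ G}) fun G hG =>
      Submodule.one_le_finrank_iff.mp (hℱ W hWℱ G hG.1)
  have hpS : (p.rep : V) ∉ S := fun hpS => by
    have hmem : (p.rep : V) ∈ S ⊓ W := ⟨hpS, p.rep.2⟩
    rw [hSW, Submodule.mem_bot] at hmem
    exact p.rep_nonzero (Subtype.ext hmem)
  refine ⟨S ⊔ K ∙ (p.rep : V), Submodule.finrank_sup_span_singleton hpS, ?_⟩
  rw [Projectivization.card_of_finrank K W (hdim W hWℱ)] at hp
  convert hp using 3
  ext G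
  simp [Submodule.span_singleton_le_iff_mem, and_assoc]

lemma exists_finrank_add_ncard_le_pow (hdim : ∀ A ∈ ℱ, finrank K A = m)
    (hℱ : IsIntersectingFamily ℱ) (k : ℕ) (S : Submodule K V)
    (hk : finrank K S + k ≤ coveringNumber ℱ) :
    ∃ T : Submodule K V, finrank K T = finrank K S + k ∧
      {G | G ∈ ℱ ∧ S ≤ G}.ncard ≤
        (∑ i ∈ Finset.range m, Nat.card K ^ i) ^ k * {G | G ∈ ℱ ∧ T ≤ G}.ncard := by
  induction k generalizing S with
  | zero => exact ⟨S, rfl, by simp⟩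
  | succ k ih =>
    obtain ⟨S', hS', hSS'⟩ := exists_finrank_succ_ncard_le hdim hℱ (S := S) (by omega)
    obtain ⟨T, hT, hS'T⟩ := ih S' (by omega)
    refine ⟨T, by omega, hSS'.trans ?_⟩
    rw [pow_succ', mul_assoc]
    exact Nat.mul_le_mul_left _ hS'T

end

theorem stmt3_general {F V : Type*} [Field F] [Fintype F] [AddCommGroup V] [Module F V]
    [FiniteDimensional F V] {q m s t : ℕ} (hq : Fintype.card F = q)
    (ℱ : Set (Submodule F V)) (hdim : ∀ A ∈ ℱ, finrank F ↥A = m)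
    (hint : IsIntersectingFamily ℱ) (hτ : coveringNumber ℱ = m)
    (hst : s ≤ t) (htm : t ≤ m) :
    ∀ S : Submodule F V, finrank F ↥S = s →
      (∃ T : Submodule F V, finrank F ↥T = t ∧
        ({G | G ∈ ℱ ∧ S ≤ G}.ncard : ℚ) ≤
          gaussBinom q m 1 ^ (t - s) * ({G | G ∈ ℱ ∧ T ≤ G}.ncard : ℚ)) ∧
      ({G | G ∈ ℱ ∧ S ≤ G}.ncard : ℚ) ≤ gaussBinom q m 1 ^ (m - s) := by
  intro S hS
  have hgauss : gaussBinom q m 1 = ((∑ i ∈ Finset.range m, Nat.card F ^ i : ℕ) : ℚ) := by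
    rw [gaussBinom_one_eq_geom_sum (hq ▸ Fintype.one_lt_card.ne'), Nat.card_eq_fintype_card, hq]
    norm_cast
  rw [hgauss]
  constructor
  · obtain ⟨T, hT, hST⟩ := exists_finrank_add_ncard_le_pow hdim hint (t - s) S (by omega)
    exact ⟨T, by omega, mod_cast hST⟩
  · obtain ⟨T, hT, hST⟩ := exists_finrank_add_ncard_le_pow hdim hint (m - s) S (by omega)
    have hT1 := ncard_setOf_mem_and_le_le_one hdim (T := T) (by omega)
    exact_mod_cast hST.trans (mul_le_of_le_one_right (Nat.zero_le _) hT1)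

theorem stmt3 {F V : Type*} [Field F] [Fintype F] [AddCommGroup V] [Module F V]
    [FiniteDimensional F V] {q m n s t : ℕ} (hq : Fintype.card F = q) (hV : finrank F V = n)
    (ℱ : Set (Submodule F V)) (hdim : ∀ A ∈ ℱ, finrank F ↥A = m)
    (hint : IsIntersectingFamily ℱ) (hτ : coveringNumber ℱ = m)
    (hst : s ≤ t) (htm : t ≤ m) :
    ∀ S : Submodule F V, finrank F ↥S = s →
      (∃ T : Submodule F V, finrank F ↥T = t ∧
        ({G | G ∈ ℱ ∧ S ≤ G}.ncard : ℚ) ≤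
          gaussBinom q m 1 ^ (t - s) * ({G | G ∈ ℱ ∧ T ≤ G}.ncard : ℚ)) ∧
      ({G | G ∈ ℱ ∧ S ≤ G}.ncard : ℚ) ≤ gaussBinom q m 1 ^ (m - s) :=
  stmt3_general hq ℱ hdim hint hτ hst htm
end

section
/- Let V be an n-dimensional vector space over 𝔽_q with m ≥ 2, and let ℱ be a nonempty intersecting family of m-dimensional subspaces of V with covering number τ(ℱ) = m. Let X = Σ_{F ∈ ℱ} F be the subspace spanned by all members of ℱ. Then dim(X) ≥ 2m − 1. -/
open Module

/-!
Every subspace `W ≤ X = Σ_{A ∈ ℱ} A` of dimension `dim X + 1 - m` meets each `m`-dimensional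
`A ≤ X`, since `dim W + dim A > dim X`. Hence `m = τ(ℱ) ≤ dim X + 1 - m`.
-/

section

variable {F V : Type*} [Field F] [AddCommGroup V] [Module F V]

theorem Submodule.exists_le_finrank_eq (X : Submodule F V) {k : ℕ} (hk : k ≤ finrank F X) :
    ∃ W ≤ X, finrank F W = k := by
  obtain ⟨f, hf⟩ := exists_linearIndependent_of_le_finrank hk
  refine ⟨span F (Set.range (X.subtype ∘ f)), ?_, ?_⟩
  · rw [span_le, Set.range_comp]
    exact fun _ ⟨x, _, hx⟩ ↦ hx ▸ x.2
  · rw [finrank_span_eq_card (hf.map' X.subtype X.ker_subtype), Fintype.card_fin]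

variable [FiniteDimensional F V]

theorem Submodule.one_le_finrank_inf_of_lt_finrank_add {W B X : Submodule F V}
    (hW : W ≤ X) (hB : B ≤ X) (h : finrank F X < finrank F W + finrank F B) :
    1 ≤ finrank F ↥(W ⊓ B) := by
  have hsup : finrank F ↥(W ⊔ B) ≤ finrank F X := finrank_mono (sup_le hW hB)
  have := finrank_sup_add_finrank_inf_eq W B
  omega

theorem coveringNumber_le_finrank_add_one_sub {ℱ : Set (Submodule F V)} {X : Submodule F V}
    {m : ℕ} (hX : ∀ A ∈ ℱ, A ≤ X) (hdim : ∀ A ∈ ℱ, m ≤ finrank F A) (hm : 0 < m) :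
    coveringNumber ℱ ≤ finrank F X + 1 - m := by
  obtain ⟨W, hWX, hW⟩ := X.exists_le_finrank_eq (k := finrank F X + 1 - m) (by omega)
  refine Nat.sInf_le ⟨W, hW, fun A hA ↦ ?_⟩
  refine Submodule.one_le_finrank_inf_of_lt_finrank_add hWX (hX A hA) ?_
  have := hdim A hA
  omega

end

theorem stmt4_general {F V : Type*} [Field F] [AddCommGroup V] [Module F V]
    [FiniteDimensional F V] {m : ℕ}
    (ℱ : Set (Submodule F V))
    (hdim : ∀ A ∈ ℱ, finrank F ↥A = m)
    (hτ : coveringNumber ℱ = m) :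
    2 * m - 1 ≤ finrank F ↥(sSup ℱ) := by
  rcases Nat.eq_zero_or_pos m with rfl | hm
  · simp
  · have := coveringNumber_le_finrank_add_one_sub (fun _ ↦ le_sSup)
      (fun A hA ↦ (hdim A hA).ge) hm
    omega

theorem stmt4 {F V : Type*} [Field F] [Fintype F] [AddCommGroup V] [Module F V]
    [FiniteDimensional F V] {m n : ℕ} (hm : 2 ≤ m) (hV : finrank F V = n)
    (ℱ : Set (Submodule F V)) (hne : ℱ.Nonempty)
    (hdim : ∀ A ∈ ℱ, finrank F ↥A = m)
    (hint : IsIntersectingFamily ℱ) (hτ : coveringNumber ℱ = m) :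
    2 * m - 1 ≤ finrank F ↥(sSup ℱ) :=
  stmt4_general ℱ hdim hτ
end

section
/- Let V be an n-dimensional vector space over 𝔽_q with m ≥ 2, and let ℱ be a nonempty intersecting family of m-dimensional subspaces of V with covering number τ(ℱ) = m. Let X = Σ_{F ∈ ℱ} F. If dim(X) = 2m − 1, then |ℱ| ≤ [2m−1 over m]_q, and equality holds if and only if ℱ is the family of all m-dimensional subspaces of X. -/
/-!
Every member of `ℱ` is an `m`-dimensional subspace of `X = ∑ F`, so `ℱ` is contained in the
set of all `m`-dimensional subspaces of the `(2m-1)`-dimensional space `X`; this set has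
`[2m-1 over m]_q` elements, and a subset of a finite set has the same size only if it is the
whole set. The number of `k`-dimensional subspaces of an `N`-dimensional space is found by
counting linearly independent `k`-tuples in two ways: there are `∏_{i<k} (q^N - q^i)` of them,
and each `k`-dimensional subspace is spanned by exactly `∏_{i<k} (q^k - q^i)` of them.
-/

open Module

open Submodule Set

theorem cast_prod_pow_sub_pow {q N k : ℕ} (hq : 1 ≤ q) (hk : k ≤ N) :
    ((∏ i : Fin k, (q ^ N - q ^ (i : ℕ)) : ℕ) : ℚ) =
      ∏ i ∈ Finset.range k, ((q : ℚ) ^ N - q ^ i) := by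
  rw [Nat.cast_prod, Fin.prod_univ_eq_prod_range (fun i => ((q ^ N - q ^ i : ℕ) : ℚ))]
  refine Finset.prod_congr rfl fun i hi => ?_
  rw [Nat.cast_sub (Nat.pow_le_pow_right hq ((Finset.mem_range.mp hi).le.trans hk)),
    Nat.cast_pow, Nat.cast_pow]

theorem gaussBinom_mul_prod_pow_sub_pow {q N k : ℕ} (hq : 1 < q) (hk : k ≤ N) :
    gaussBinom q N k * ∏ i ∈ Finset.range k, ((q : ℚ) ^ k - q ^ i) =
      ∏ i ∈ Finset.range k, ((q : ℚ) ^ N - q ^ i) := by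
  have hfactor {M : ℕ} (hM : k ≤ M) : ∏ i ∈ Finset.range k, ((q : ℚ) ^ M - q ^ i) =
      ∏ i ∈ Finset.range k, (q : ℚ) ^ i * ((q : ℚ) ^ (M - i) - 1) := by
    refine Finset.prod_congr rfl fun i hi => ?_
    rw [mul_sub, mul_one, ← pow_add, Nat.add_sub_cancel' ((Finset.mem_range.mp hi).le.trans hM)]
  rw [hfactor hk, hfactor le_rfl, gaussBinom, ← Finset.prod_mul_distrib]
  refine Finset.prod_congr rfl fun i hi => ?_
  have : (q : ℚ) ^ (k - i) - 1 ≠ 0 := by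
    rw [sub_ne_zero]
    exact_mod_cast (Nat.one_lt_pow (by have := Finset.mem_range.mp hi; omega) hq).ne'
  field_simp

section Grassmannian

variable {K W : Type*} [DivisionRing K] [AddCommGroup W] [Module K W]

def spanOfLinearIndependent (k : ℕ) :
    {s : Fin k → W // LinearIndependent K s} → {p : Submodule K W // finrank K p = k} :=
  fun s => ⟨span K (range s.1), by rw [finrank_span_eq_card s.2, Fintype.card_fin]⟩

variable [FiniteDimensional K W]

def spanOfLinearIndependentFiberEquiv {k : ℕ} (p : {p : Submodule K W // finrank K p = k}) :
    {s // spanOfLinearIndependent k s = p} ≃ {t : Fin k → p.1 // LinearIndependent K t} where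
  toFun s := ⟨fun i => ⟨s.1.1 i, congrArg Subtype.val s.2 ▸ subset_span (mem_range_self i)⟩,
    LinearIndependent.of_comp p.1.subtype s.1.2⟩
  invFun t := ⟨⟨fun i => t.1 i, t.2.map' p.1.subtype p.1.ker_subtype⟩, by
    have hspan : span K (range t.1) = ⊤ :=
      eq_top_of_finrank_eq (by rw [finrank_span_eq_card t.2, Fintype.card_fin, p.2])
    apply Subtype.ext
    change span K (range (p.1.subtype ∘ t.1)) = p.1
    rw [range_comp, ← map_span, hspan, map_subtype_top]⟩
  left_inv _ := rfl
  right_inv _ := rfl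

variable [Fintype K]

/-- Double counting of the linearly independent `k`-tuples of `W`, sorted by their span. -/
theorem natCard_finrank_eq_mul_prod {k : ℕ} (hk : k ≤ finrank K W) :
    Nat.card {p : Submodule K W // finrank K p = k} *
        ∏ i : Fin k, (Fintype.card K ^ k - Fintype.card K ^ (i : ℕ)) =
      ∏ i : Fin k, (Fintype.card K ^ finrank K W - Fintype.card K ^ (i : ℕ)) := by
  have : Finite W := Module.finite_of_finite K
  have := Fintype.ofFinite {p : Submodule K W // finrank K p = k}
  have hfiber (p : {p : Submodule K W // finrank K p = k}) :
      Nat.card {s // spanOfLinearIndependent k s = p} =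
        ∏ i : Fin k, (Fintype.card K ^ k - Fintype.card K ^ (i : ℕ)) := by
    rw [Nat.card_congr (spanOfLinearIndependentFiberEquiv p)]
    have h := card_linearIndependent (K := K) (V := p.1) p.2.ge
    rwa [p.2] at h
  rw [← card_linearIndependent hk,
    ← Nat.card_congr (Equiv.sigmaFiberEquiv (spanOfLinearIndependent (K := K) (W := W) k)),
    Nat.card_sigma]
  simp only [hfiber, Finset.sum_const, Finset.card_univ, ← Nat.card_eq_fintype_card, smul_eq_mul]

theorem natCard_finrank_eq_gaussBinom {k : ℕ} (hk : k ≤ finrank K W) :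
    (Nat.card {p : Submodule K W // finrank K p = k} : ℚ) =
      gaussBinom (Fintype.card K) (finrank K W) k := by
  have hq : 1 < Fintype.card K := Fintype.one_lt_card
  have h := congrArg (Nat.cast : ℕ → ℚ) (natCard_finrank_eq_mul_prod (K := K) (W := W) hk)
  rw [Nat.cast_mul, cast_prod_pow_sub_pow hq.le le_rfl, cast_prod_pow_sub_pow hq.le hk,
    ← gaussBinom_mul_prod_pow_sub_pow hq hk] at h
  refine mul_right_cancel₀ (Finset.prod_ne_zero_iff.mpr fun i hi => ?_) h
  rw [sub_ne_zero]
  exact_mod_cast (Nat.pow_lt_pow_right hq (Finset.mem_range.mp hi)).ne'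

end Grassmannian

section SubspacesOfSubspace

variable {K V : Type*} [DivisionRing K] [AddCommGroup V] [Module K V]

def finrankEqLeEquiv (X : Submodule K V) (k : ℕ) :
    {p : Submodule K X // finrank K p = k} ≃ {G : Submodule K V | finrank K G = k ∧ G ≤ X} :=
  ((MapSubtype.orderIso X).toEquiv.subtypeEquiv fun p => by
      rw [← finrank_map_subtype_eq X p]; rfl).trans <|
    (Equiv.subtypeSubtypeEquivSubtypeInter (· ≤ X) (fun G => finrank K G = k)).trans <|
      Equiv.subtypeEquivRight fun _ => and_comm

variable [Fintype K] (X : Submodule K V) [FiniteDimensional K X]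

theorem finite_setOf_finrank_eq_and_le (k : ℕ) :
    {G : Submodule K V | finrank K G = k ∧ G ≤ X}.Finite :=
  have : Finite X := Module.finite_of_finite K
  Set.finite_coe_iff.mp (Finite.of_equiv _ (finrankEqLeEquiv X k))

theorem ncard_setOf_finrank_eq_and_le {k : ℕ} (hk : k ≤ finrank K X) :
    ({G : Submodule K V | finrank K G = k ∧ G ≤ X}.ncard : ℚ) =
      gaussBinom (Fintype.card K) (finrank K X) k := by
  rw [← Nat.card_coe_set_eq, ← Nat.card_congr (finrankEqLeEquiv X k),
    natCard_finrank_eq_gaussBinom hk]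

end SubspacesOfSubspace

theorem stmt5_general {F V : Type*} [Field F] [Fintype F] [AddCommGroup V] [Module F V]
    {q m : ℕ} (hq : Fintype.card F = q)
    (hm : 2 ≤ m)
    (ℱ : Set (Submodule F V))
    (hdim : ∀ A ∈ ℱ, finrank F ↥A = m)
    (hX : finrank F ↥(sSup ℱ) = 2 * m - 1) :
    (ℱ.ncard : ℚ) ≤ gaussBinom q (2 * m - 1) m ∧
      ((ℱ.ncard : ℚ) = gaussBinom q (2 * m - 1) m ↔
        ℱ = {G : Submodule F V | finrank F ↥G = m ∧ G ≤ sSup ℱ}) := by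
  have : FiniteDimensional F ↥(sSup ℱ) := Module.finite_of_finrank_pos (by omega)
  have hsub : ℱ ⊆ {G | finrank F G = m ∧ G ≤ sSup ℱ} := fun A hA =>
    ⟨hdim A hA, le_sSup hA⟩
  have hfin := finite_setOf_finrank_eq_and_le (sSup ℱ) m
  rw [← hq, ← hX, ← ncard_setOf_finrank_eq_and_le (sSup ℱ) (by omega), Nat.cast_le,
    Nat.cast_inj]
  exact ⟨Set.ncard_le_ncard hsub hfin,
    fun h => Set.eq_of_subset_of_ncard_le hsub h.ge hfin, fun h => congrArg Set.ncard h⟩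

theorem stmt5 {F V : Type*} [Field F] [Fintype F] [AddCommGroup V] [Module F V]
    [FiniteDimensional F V] {q m n : ℕ} (hq : Fintype.card F = q)
    (hm : 2 ≤ m) (hV : finrank F V = n)
    (ℱ : Set (Submodule F V)) (hne : ℱ.Nonempty)
    (hdim : ∀ A ∈ ℱ, finrank F ↥A = m)
    (hint : IsIntersectingFamily ℱ) (hτ : coveringNumber ℱ = m)
    (hX : finrank F ↥(sSup ℱ) = 2 * m - 1) :
    (ℱ.ncard : ℚ) ≤ gaussBinom q (2 * m - 1) m ∧
      ((ℱ.ncard : ℚ) = gaussBinom q (2 * m - 1) m ↔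
        ℱ = {G : Submodule F V | finrank F ↥G = m ∧ G ≤ sSup ℱ}) :=
  stmt5_general hq hm ℱ hdim hX
end

section
/- For all integers q ≥ 2 and m ≥ 2, the inequality [2m−1 over m]_q > q^{2(m−1)} · [2m−3 over m−2]_q holds. -/
theorem gaussBinom_succ_succ (q n m : ℕ) :
    gaussBinom q (n + 1) (m + 1) =
      gaussBinom q n m * (((q : ℚ) ^ (n + 1) - 1) / ((q : ℚ) ^ (m + 1) - 1)) := by
  unfold gaussBinom
  rw [Finset.prod_range_succ']
  simp only [Nat.add_sub_add_right, Nat.sub_zero]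

theorem gaussBinom_pos {q n m : ℕ} (hq : 1 < q) (hmn : m ≤ n) : 0 < gaussBinom q n m := by
  have one_lt_pow {e : ℕ} (he : e ≠ 0) : (1 : ℚ) < (q : ℚ) ^ e :=
    one_lt_pow₀ (by exact_mod_cast hq) he
  refine Finset.prod_pos fun i hi => div_pos ?_ ?_ <;> rw [Finset.mem_range] at hi
  · exact sub_pos.2 (one_lt_pow (by omega))
  · exact sub_pos.2 (one_lt_pow (by omega))

theorem pow_lt_pow_add_sub_one_div {K : Type*} [Field K] [LinearOrder K] [IsStrictOrderedRing K]
    {x : K} (hx : 1 < x) {a d : ℕ} (ha : a ≠ 0) (hd : d ≠ 0) :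
    x ^ a < (x ^ (a + d) - 1) / (x ^ d - 1) := by
  rw [lt_div_iff₀ (sub_pos.2 (one_lt_pow₀ hx hd)), pow_add]
  linarith [one_lt_pow₀ hx ha]

theorem pow_mul_gaussBinom_lt_gaussBinom {q : ℕ} (hq : 1 < q) (k : ℕ) :
    (q : ℚ) ^ (2 * k + 2) * gaussBinom q (2 * k + 1) k < gaussBinom q (2 * k + 3) (k + 2) := by
  have hx : (1 : ℚ) < q := by exact_mod_cast hq
  have lt_first : (q : ℚ) ^ (k + 1) < ((q : ℚ) ^ (2 * k + 2) - 1) / ((q : ℚ) ^ (k + 1) - 1) := by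
    have := pow_lt_pow_add_sub_one_div hx (a := k + 1) (d := k + 1) (by omega) (by omega)
    rwa [show k + 1 + (k + 1) = 2 * k + 2 by ring] at this
  have lt_second : (q : ℚ) ^ (k + 1) < ((q : ℚ) ^ (2 * k + 3) - 1) / ((q : ℚ) ^ (k + 2) - 1) := by
    have := pow_lt_pow_add_sub_one_div hx (a := k + 1) (d := k + 2) (by omega) (by omega)
    rwa [show k + 1 + (k + 2) = 2 * k + 3 by ring] at this
  have hpow : (0 : ℚ) < (q : ℚ) ^ (k + 1) := pow_pos (by positivity) _
  calc (q : ℚ) ^ (2 * k + 2) * gaussBinom q (2 * k + 1) k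
      = gaussBinom q (2 * k + 1) k * ((q : ℚ) ^ (k + 1) * (q : ℚ) ^ (k + 1)) := by ring
    _ < gaussBinom q (2 * k + 1) k * (((q : ℚ) ^ (2 * k + 2) - 1) / ((q : ℚ) ^ (k + 1) - 1) *
          (((q : ℚ) ^ (2 * k + 3) - 1) / ((q : ℚ) ^ (k + 2) - 1))) :=
        mul_lt_mul_of_pos_left (mul_lt_mul'' lt_first lt_second hpow.le hpow.le)
          (gaussBinom_pos hq (by omega))
    _ = gaussBinom q (2 * k + 3) (k + 2) := by
        rw [gaussBinom_succ_succ, gaussBinom_succ_succ, mul_assoc]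

theorem stmt11 {q m : ℕ} (hq : 2 ≤ q) (hm : 2 ≤ m) :
    (q : ℚ) ^ (2 * (m - 1)) * gaussBinom q (2 * m - 3) (m - 2) <
      gaussBinom q (2 * m - 1) m := by
  obtain ⟨k, rfl⟩ : ∃ k, m = k + 2 := ⟨m - 2, by omega⟩
  rw [show 2 * (k + 2 - 1) = 2 * k + 2 by omega, show 2 * (k + 2) - 3 = 2 * k + 1 by omega,
    show k + 2 - 2 = k by omega, show 2 * (k + 2) - 1 = 2 * k + 3 by omega]
  exact pow_mul_gaussBinom_lt_gaussBinom hq k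
end

section
/- For all integers q and m with q ≥ m ≥ 4, the inequalities q^{m−1}/(q−1)^{m−2} < q²/(q−m+2) ≤ q(q−2) hold. -/
section

variable {K : Type*} [Field K] [LinearOrder K] [IsStrictOrderedRing K]

/-- Strict Bernoulli inequality `(1 - 1/x)^(n+2) > 1 - (n+2)/x`, multiplied by `x^(n+2)`. -/
theorem pow_succ_mul_sub_lt_sub_one_pow {x : K} (hx : 1 ≤ x) (n : ℕ) :
    x ^ (n + 1) * (x - (n + 2)) < (x - 1) ^ (n + 2) := by
  have bernoulli : x ^ (n + 1) - (n + 1) * x ^ n ≤ (x - 1) ^ (n + 1) := by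
    have h := pow_add_mul_le_add_pow (a := x) (b := -1) (by linarith) (by linarith) (n + 1)
    push_cast at h
    simpa [← sub_eq_add_neg] using h
  calc x ^ (n + 1) * (x - (n + 2))
      = x ^ n * ((x - 1) * (x - (n + 1))) - (n + 1) * x ^ n := by ring
    _ < x ^ n * ((x - 1) * (x - (n + 1))) := sub_lt_self _ (by positivity)
    _ = (x - 1) * (x ^ (n + 1) - (n + 1) * x ^ n) := by ring
    _ ≤ (x - 1) * (x - 1) ^ (n + 1) := by gcongr
    _ = (x - 1) ^ (n + 2) := by ring

theorem pow_div_sub_one_pow_lt_sq_div {x : K} (n : ℕ) (hx : n + 2 < x) :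
    x ^ (n + 3) / (x - 1) ^ (n + 2) < x ^ 2 / (x - (n + 2)) := by
  have hx1 : 1 < x := by linarith [(Nat.cast_nonneg n : (0 : K) ≤ n)]
  rw [div_lt_div_iff₀ (pow_pos (sub_pos.2 hx1) _) (by linarith)]
  calc x ^ (n + 3) * (x - (n + 2))
      = x ^ 2 * (x ^ (n + 1) * (x - (n + 2))) := by ring
    _ < x ^ 2 * (x - 1) ^ (n + 2) := by
      gcongr
      exact pow_succ_mul_sub_lt_sub_one_pow hx1.le n

theorem sq_div_le_mul_sub_two {x d : K} (hx : 4 ≤ x) (hd : 2 ≤ d) :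
    x ^ 2 / d ≤ x * (x - 2) := by
  rw [div_le_iff₀ (by linarith)]
  nlinarith [mul_le_mul_of_nonneg_left hd (by nlinarith : (0 : K) ≤ x * (x - 2))]

end

theorem stmt12 {q m : ℕ} (hqm : m ≤ q) (hm : 4 ≤ m) :
    (q : ℚ) ^ (m - 1) / ((q : ℚ) - 1) ^ (m - 2) < (q : ℚ) ^ 2 / ((q : ℚ) - (m : ℚ) + 2) ∧
      (q : ℚ) ^ 2 / ((q : ℚ) - (m : ℚ) + 2) ≤ (q : ℚ) * ((q : ℚ) - 2) := by
  obtain ⟨n, rfl⟩ : ∃ n, m = n + 4 := ⟨m - 4, by omega⟩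
  have hq : (n : ℚ) + 4 ≤ q := by exact_mod_cast hqm
  have hden : (q : ℚ) - ((n + 4 : ℕ) : ℚ) + 2 = q - (n + 2) := by push_cast; ring
  rw [show n + 4 - 1 = n + 3 by omega, show n + 4 - 2 = n + 2 by omega, hden]
  exact ⟨pow_div_sub_one_pow_lt_sq_div n (by linarith),
    sq_div_le_mul_sub_two (by linarith [(Nat.cast_nonneg n : (0 : ℚ) ≤ n)]) (by linarith)⟩
end

section
/- Let V be a finite-dimensional vector space over 𝔽_q, and let A and B be subspaces of V with dim A = a, dim B = b, and dim(A ∩ B) = c. Suppose 0 ≤ d ≤ a − b. Then there exists a subspace S of A + B with dim S = b − c + d such that dim(S ∩ A) = d and S ∩ B = 0. -/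
/-!
Choose `D ≤ A` of dimension `d` meeting `B` trivially, `U ≤ A` of dimension `b - c` meeting
`D ⊔ B` trivially, and `W ≤ B` of dimension `b - c` meeting `A` trivially; each exists because a
complement of `P ⊓ Q` cuts `P` in a subspace of dimension `dim P - dim (P ⊓ Q)` avoiding `Q`.
For an isomorphism `e : W ≃ U`, take `S = {w + e w} ⊔ D`. The graph `{w + e w}` meets `A`
trivially because `W` does, and meets `D ⊔ B` trivially because `U` does; so `S ⊓ A = D` by
modularity and `S ⊓ B = 0`.
-/

open Module

namespace LinearMap

variable {R V : Type*} [Ring R] [AddCommGroup V] [Module R V] {W U : Submodule R V}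

/-- The graph of `f`, as the subspace `{w + f w}` of `V` rather than of `W × U`. -/
def internalGraph (f : W →ₗ[R] U) : Submodule R V :=
  range (W.subtype + U.subtype ∘ₗ f)

theorem internalGraph_le_sup (f : W →ₗ[R] U) : f.internalGraph ≤ W ⊔ U := by
  rintro _ ⟨w, rfl⟩
  exact Submodule.add_mem_sup w.2 (f w).2

theorem disjoint_internalGraph_of_disjoint_left (f : W →ₗ[R] U) {X : Submodule R V}
    (hUX : U ≤ X) (hWX : Disjoint W X) : Disjoint f.internalGraph X := by
  rw [Submodule.disjoint_def]
  rintro _ ⟨w, rfl⟩ hX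
  have hw : (w : V) ∈ X := by
    simpa using X.sub_mem hX (hUX (f w).2)
  have hw0 : w = 0 := Subtype.ext (Submodule.disjoint_def.1 hWX _ w.2 hw)
  simp [hw0]

theorem disjoint_internalGraph_of_disjoint_right {f : W →ₗ[R] U} (hf : Function.Injective f)
    {Y : Submodule R V} (hWY : W ≤ Y) (hUY : Disjoint U Y) : Disjoint f.internalGraph Y := by
  rw [Submodule.disjoint_def]
  rintro _ ⟨w, rfl⟩ hY
  have hfw : ((f w : U) : V) ∈ Y := by
    simpa using Y.sub_mem hY (hWY w.2)
  have hw0 : w = 0 :=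
    hf (by simpa using Subtype.ext (Submodule.disjoint_def.1 hUY _ (f w).2 hfw))
  simp [hw0]

theorem injective_subtype_add_comp (f : W →ₗ[R] U) (hWU : Disjoint W U) :
    Function.Injective (W.subtype + U.subtype ∘ₗ f) := by
  rw [← ker_eq_bot, Submodule.eq_bot_iff]
  intro w hw
  have hw0 : (w : V) + f w = 0 := hw
  have hwU : (w : V) ∈ U := by
    rw [eq_neg_of_add_eq_zero_left hw0]
    exact U.neg_mem (f w).2
  exact Subtype.ext (Submodule.disjoint_def.1 hWU _ w.2 hwU)

theorem finrank_internalGraph (f : W →ₗ[R] U) (hWU : Disjoint W U) :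
    finrank R f.internalGraph = finrank R W :=
  finrank_range_of_inj (f.injective_subtype_add_comp hWU)

end LinearMap

namespace Submodule

variable {K V : Type*} [Field K] [AddCommGroup V] [Module K V]

theorem exists_le_finrank_eq_s15 {P : Submodule K V} {k : ℕ} (hk : k ≤ finrank K P) :
    ∃ S ≤ P, finrank K S = k := by
  obtain ⟨v, hv⟩ := exists_linearIndependent_of_le_finrank hk
  refine ⟨span K (Set.range (P.subtype ∘ v)), span_le.2 ?_, ?_⟩
  · rintro _ ⟨i, rfl⟩
    exact (v i).2
  · rw [finrank_span_eq_card (hv.map' P.subtype P.ker_subtype), Fintype.card_fin]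

theorem exists_le_disjoint_finrank_eq [FiniteDimensional K V] {P Q : Submodule K V} {k : ℕ}
    (hk : k + finrank K ↥(P ⊓ Q) ≤ finrank K P) :
    ∃ S ≤ P, Disjoint S Q ∧ finrank K S = k := by
  obtain ⟨C, hC⟩ := exists_isCompl (P ⊓ Q)
  have hCP : Disjoint (C ⊓ P) Q := by
    rw [disjoint_iff, inf_assoc, ← disjoint_iff]
    exact hC.disjoint.symm
  have hdim : k ≤ finrank K ↥(C ⊓ P) := by
    have h₁ := finrank_sup_add_finrank_inf_eq C P
    have h₂ := finrank_add_eq_of_isCompl hC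
    have h₃ := finrank_le (C ⊔ P)
    omega
  obtain ⟨S, hS, hSk⟩ := exists_le_finrank_eq_s15 hdim
  exact ⟨S, hS.trans inf_le_right, hCP.mono_left hS, hSk⟩

end Submodule

open Submodule in
theorem stmt15_general {F V : Type*} [Field F] [AddCommGroup V] [Module F V]
    [FiniteDimensional F V] {a b c d : ℕ}
    (A B : Submodule F V) (hA : finrank F ↥A = a) (hB : finrank F ↥B = b)
    (hC : finrank F ↥(A ⊓ B) = c) (hd : (d : ℤ) ≤ (a : ℤ) - (b : ℤ)) :
    ∃ S : Submodule F V, S ≤ A ⊔ B ∧ finrank F ↥S = b - c + d ∧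
      finrank F ↥(S ⊓ A) = d ∧ finrank F ↥(S ⊓ B) = 0 := by
  have hcb : c ≤ b := hC ▸ hB ▸ finrank_mono inf_le_right
  obtain ⟨W, hWB, hWA, hW⟩ := exists_le_disjoint_finrank_eq (P := B) (Q := A) (k := b - c)
    (by rw [inf_comm, hC, hB]; omega)
  obtain ⟨D, hDA, hDB, hD⟩ := exists_le_disjoint_finrank_eq (P := A) (Q := B) (k := d)
    (by rw [hC, hA]; omega)
  have hADB : finrank F ↥(A ⊓ (D ⊔ B)) ≤ d + c := by
    rw [inf_comm, sup_inf_assoc_of_le B hDA, inf_comm, ← hD, ← hC]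
    exact finrank_add_le_finrank_add_finrank D (A ⊓ B)
  obtain ⟨U, hUA, hUDB, hU⟩ := exists_le_disjoint_finrank_eq (P := A) (Q := D ⊔ B)
    (k := b - c) (by omega)
  let e : W →ₗ[F] U := LinearEquiv.ofFinrankEq W U (hW.trans hU.symm)
  have hTA : Disjoint e.internalGraph A := e.disjoint_internalGraph_of_disjoint_left hUA hWA
  have hTDB : Disjoint e.internalGraph (D ⊔ B) :=
    LinearMap.disjoint_internalGraph_of_disjoint_right (LinearEquiv.injective _)
      (hWB.trans le_sup_right) hUDB
  have hT : finrank F e.internalGraph = b - c := by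
    rw [e.finrank_internalGraph (hWA.mono_right hUA), hW]
  refine ⟨e.internalGraph ⊔ D, sup_le ?_ (hDA.trans le_sup_left), ?_, ?_, ?_⟩
  · exact e.internalGraph_le_sup.trans (sup_comm B A ▸ sup_le_sup hWB hUA)
  · rw [← add_zero (finrank F ↥(_ ⊔ D)), ← finrank_bot F V, ← (hTA.mono_right hDA).eq_bot,
      finrank_sup_add_finrank_inf_eq, hT, hD]
  · rw [sup_comm, sup_inf_assoc_of_le _ hDA, hTA.eq_bot, sup_bot_eq, hD]
  · rw [(hDB.disjoint_sup_left_of_disjoint_sup_right hTDB).eq_bot, finrank_bot]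

theorem stmt15 {F V : Type*} [Field F] [Fintype F] [AddCommGroup V] [Module F V]
    [FiniteDimensional F V] {a b c d : ℕ}
    (A B : Submodule F V) (hA : finrank F ↥A = a) (hB : finrank F ↥B = b)
    (hC : finrank F ↥(A ⊓ B) = c) (hd : (d : ℤ) ≤ (a : ℤ) - (b : ℤ)) :
    ∃ S : Submodule F V, S ≤ A ⊔ B ∧ finrank F ↥S = b - c + d ∧
      finrank F ↥(S ⊓ A) = d ∧ finrank F ↥(S ⊓ B) = 0 :=
  stmt15_general A B hA hB hC hd
end

section
/- Let n > 0 and l ≥ 0 be integers, V an (n+l)-dimensional vector space over 𝔽_q, and W₁ a fixed l-dimensional subspace of V. Let P be a subspace of V of type (m,k), and let N(m₁,k₁;m,k;n+l,n) be the number of subspaces of type (m₁,k₁) contained in P. Then N(m₁,k₁;m,k;n+l,n) > 0 if and only if 0 ≤ k₁ ≤ k ≤ l and 0 ≤ m₁ − k₁ ≤ m − k ≤ n; moreover, when these conditions hold, N(m₁,k₁;m,k;n+l,n) = q^{(m₁−k₁)(k−k₁)} · [m−k over m₁−k₁]_q · [k over k₁]_q. -/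
/-!
Count adapted frames: a linearly independent `k₁`-tuple in `W₁` followed by an `r`-tuple
(`r = m₁ - k₁`) that stays independent modulo `W₁`. Inside a subspace `T` with
`dim T = a`, `dim (T ∩ W₁) = b` there are `∏_{i<k₁} (q^b - q^i) · q^{br} · ∏_{i<r} (q^{a-b} - q^i)`
of them: the second tuple is an independent tuple in `T / (T ∩ W₁)`, lifted in `q^b` ways per
vector. Every frame inside `P` spans a subspace of type `(m₁, k₁)` in `P`, and the frames spanning
a given such `S` are exactly the frames inside `S`. Dividing the count for `P` by the count for `S`
gives the formula; the necessary conditions come from `dim (S + P ∩ W₁) ≤ dim P`.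
-/

open Module

open Submodule Set

def frameCount (q d j : ℕ) : ℕ :=
  ∏ i ∈ Finset.range j, (q ^ d - q ^ i)

lemma frameCount_pos {q d j : ℕ} (hq : 1 < q) (hj : j ≤ d) : 0 < frameCount q d j :=
  Finset.prod_pos fun i hi =>
    Nat.sub_pos_of_lt (Nat.pow_lt_pow_right hq (by rw [Finset.mem_range] at hi; omega))

lemma frameCount_eq_gaussBinom_mul {q d j : ℕ} (hq : 1 < q) (hj : j ≤ d) :
    (frameCount q d j : ℚ) = gaussBinom q d j * frameCount q j j := by
  rw [frameCount, frameCount, gaussBinom, Nat.cast_prod, Nat.cast_prod,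
    ← Finset.prod_mul_distrib]
  refine Finset.prod_congr rfl fun i hi => ?_
  rw [Finset.mem_range] at hi
  have hq' : (1 : ℚ) < q := by exact_mod_cast hq
  have hne : (q : ℚ) ^ (j - i) - 1 ≠ 0 := (sub_pos.mpr (one_lt_pow₀ hq' (by omega))).ne'
  rw [Nat.cast_sub (Nat.pow_le_pow_right (by omega) (by omega)),
    Nat.cast_sub (Nat.pow_le_pow_right (by omega) hi.le), div_mul_eq_mul_div, eq_div_iff hne]
  push_cast
  rw [← Nat.add_sub_of_le (show i ≤ d by omega), ← Nat.add_sub_of_le hi.le]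
  simp only [Nat.add_sub_cancel_left, pow_add]
  ring

section LinearIndependent

variable {F : Type*} [Field F] [Fintype F]

lemma card_linearIndependent_eq_frameCount {X : Type*} [AddCommGroup X] [Module F X]
    [FiniteDimensional F X] {j : ℕ} (hj : j ≤ finrank F X) :
    Nat.card {s : Fin j → X // LinearIndependent F s} =
      frameCount (Fintype.card F) (finrank F X) j := by
  have : Finite X := Module.finite_of_finite F
  rw [card_linearIndependent hj, frameCount, Fin.prod_univ_eq_prod_range (fun i =>
    Fintype.card F ^ finrank F X - Fintype.card F ^ i)]

lemma card_linearIndependent_comp_of_surjective {R X Y : Type*} [Ring R] [AddCommGroup X]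
    [Module R X] [AddCommGroup Y] [Module R Y] {φ : X →ₗ[R] Y} (hφ : Function.Surjective φ)
    (r : ℕ) :
    Nat.card {g : Fin r → X // LinearIndependent R (φ ∘ g)} =
      Nat.card (LinearMap.ker φ) ^ r * Nat.card {h : Fin r → Y // LinearIndependent R h} := by
  set σ := Function.surjInv hφ
  have hσ : ∀ y, φ (σ y) = y := Function.surjInv_eq hφ
  have hlift : ∀ (y : Y) (z : LinearMap.ker φ), φ (σ y + z) = y := fun y z => by
    rw [map_add, hσ, LinearMap.mem_ker.mp z.2, add_zero]
  let e : {g : Fin r → X // LinearIndependent R (φ ∘ g)} ≃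
      {h : Fin r → Y // LinearIndependent R h} × (Fin r → LinearMap.ker φ) :=
    { toFun := fun g => (⟨φ ∘ g.1, g.2⟩,
        fun i => ⟨g.1 i - σ (φ (g.1 i)), by simp [hσ]⟩)
      invFun := fun hz => ⟨fun i => σ (hz.1.1 i) + hz.2 i, by
        convert hz.1.2 using 1; funext i; exact hlift _ _⟩
      left_inv := fun g => Subtype.ext (funext fun i => by simp)
      right_inv := fun hz => Prod.ext (Subtype.ext (funext fun i => hlift _ _))
        (funext fun i => Subtype.ext (by simp only [hlift]; abel)) }
  rw [Nat.card_congr e, Nat.card_prod, Nat.card_fun, Nat.card_eq_fintype_card (α := Fin r),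
    Fintype.card_fin, mul_comm]

variable {V : Type*} [AddCommGroup V] [Module F V] [FiniteDimensional F V]

lemma card_linearIndependent_mem (T : Submodule F V) {j : ℕ} (hj : j ≤ finrank F T) :
    Nat.card {f : Fin j → V // (∀ i, f i ∈ T) ∧ LinearIndependent F f} =
      frameCount (Fintype.card F) (finrank F T) j := by
  rw [← card_linearIndependent_eq_frameCount hj]
  exact Nat.card_congr
    { toFun := fun f => ⟨fun i => ⟨f.1 i, f.2.1 i⟩, LinearIndependent.of_comp T.subtype f.2.2⟩
      invFun := fun f => ⟨fun i => f.1 i, fun i => (f.1 i).2, f.2.map' T.subtype T.ker_subtype⟩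
      left_inv := fun _ => rfl
      right_inv := fun _ => rfl }

lemma card_linearIndependent_mkQ (W S : Submodule F V) {r : ℕ}
    (hr : r ≤ finrank F S - finrank F ↥(S ⊓ W)) :
    Nat.card {g : Fin r → V // (∀ j, g j ∈ S) ∧ LinearIndependent F (W.mkQ ∘ g)} =
      (Fintype.card F ^ finrank F ↥(S ⊓ W)) ^ r *
        frameCount (Fintype.card F) (finrank F S - finrank F ↥(S ⊓ W)) r := by
  set ψ : S →ₗ[F] V ⧸ W := W.mkQ ∘ₗ S.subtype
  have hker : finrank F (LinearMap.ker ψ) = finrank F ↥(S ⊓ W) := by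
    have : LinearMap.ker ψ = comap S.subtype (S ⊓ W) := by
      rw [LinearMap.ker_comp, ker_mkQ, comap_inf, comap_subtype_self, top_inf_eq]
    rw [this]
    exact (comapSubtypeEquivOfLe inf_le_left).finrank_eq
  have hrange : finrank F (LinearMap.range ψ) = finrank F S - finrank F ↥(S ⊓ W) := by
    have := ψ.finrank_range_add_finrank_ker
    omega
  have e : {g : Fin r → V // (∀ j, g j ∈ S) ∧ LinearIndependent F (W.mkQ ∘ g)} ≃
      {g : Fin r → S // LinearIndependent F (ψ.rangeRestrict ∘ g)} :=
    { toFun := fun g => ⟨fun i => ⟨g.1 i, g.2.1 i⟩,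
        ((LinearMap.range ψ).subtype.linearIndependent_iff (ker_subtype _)).mp g.2.2⟩
      invFun := fun g => ⟨fun i => g.1 i, fun i => (g.1 i).2,
        ((LinearMap.range ψ).subtype.linearIndependent_iff (ker_subtype _)).mpr g.2⟩
      left_inv := fun _ => rfl
      right_inv := fun _ => rfl }
  rw [Nat.card_congr e, card_linearIndependent_comp_of_surjective ψ.surjective_rangeRestrict,
    LinearMap.ker_rangeRestrict, natCard_eq_pow_finrank (K := F), hker, Nat.card_eq_fintype_card,
    card_linearIndependent_eq_frameCount (hrange ▸ hr), hrange]

end LinearIndependent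

section Subspaces

variable {F V : Type*} [Field F] [AddCommGroup V] [Module F V]

def subspacesOfType (W P : Submodule F V) (m₁ k₁ : ℕ) : Set (Submodule F V) :=
  {S | S ≤ P ∧ finrank F ↥S = m₁ ∧ finrank F ↥(S ⊓ W) = k₁}

lemma finrank_add_finrank_inf_le [FiniteDimensional F V] {S P : Submodule F V} (hSP : S ≤ P)
    (W : Submodule F V) :
    finrank F S + finrank F ↥(P ⊓ W) ≤ finrank F P + finrank F ↥(S ⊓ W) := by
  have h := finrank_sup_add_finrank_inf_eq S (P ⊓ W)
  rw [← inf_assoc, inf_eq_left.mpr hSP] at h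
  have := finrank_mono (sup_le hSP inf_le_left : S ⊔ P ⊓ W ≤ P)
  omega

abbrev Frame (W : Submodule F V) (k₁ r : ℕ) : Type _ :=
  {f : Fin k₁ → V // (∀ i, f i ∈ W) ∧ LinearIndependent F f} ×
    {g : Fin r → V // LinearIndependent F (W.mkQ ∘ g)}

namespace Frame

variable {W : Submodule F V} {k₁ r : ℕ}

def span (p : Frame W k₁ r) : Submodule F V :=
  Submodule.span F (range p.1.1) ⊔ Submodule.span F (range p.2.1)

lemma span_le_iff {p : Frame W k₁ r} {S : Submodule F V} :
    p.span ≤ S ↔ (∀ i, p.1.1 i ∈ S) ∧ ∀ j, p.2.1 j ∈ S := by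
  simp only [span, sup_le_iff, Submodule.span_le, range_subset_iff, SetLike.mem_coe]

lemma span_fst_le (p : Frame W k₁ r) : Submodule.span F (range p.1.1) ≤ W :=
  Submodule.span_le.mpr (range_subset_iff.mpr p.1.2.1)

lemma disjoint_span_snd (p : Frame W k₁ r) : Disjoint (Submodule.span F (range p.2.1)) W := by
  simpa using range_ker_disjoint p.2.2

lemma span_inf (p : Frame W k₁ r) : p.span ⊓ W = Submodule.span F (range p.1.1) := by
  rw [span, sup_inf_assoc_of_le _ p.span_fst_le, disjoint_iff.mp p.disjoint_span_snd, sup_bot_eq]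

lemma finrank_span (p : Frame W k₁ r) : finrank F p.span = k₁ + r := by
  have hli : LinearIndependent F (Sum.elim p.1.1 p.2.1) :=
    p.1.2.2.sum_type (p.2.2.of_comp W.mkQ) (p.disjoint_span_snd.mono_right p.span_fst_le).symm
  rw [span, ← span_union, ← Set.Sum.elim_range, finrank_span_eq_card hli, Fintype.card_sum,
    Fintype.card_fin, Fintype.card_fin]

lemma finrank_span_inf (p : Frame W k₁ r) : finrank F ↥(p.span ⊓ W) = k₁ := by
  rw [span_inf, finrank_span_eq_card p.1.2.2, Fintype.card_fin]

lemma span_mem_subspacesOfType {P : Submodule F V} {p : Frame W k₁ r} (h : p.span ≤ P) :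
    p.span ∈ subspacesOfType W P (k₁ + r) k₁ :=
  ⟨h, p.finrank_span, p.finrank_span_inf⟩

lemma span_eq_iff_le [FiniteDimensional F V] {p : Frame W k₁ r} {S : Submodule F V}
    (hS : finrank F S = k₁ + r) : p.span = S ↔ p.span ≤ S :=
  ⟨le_of_eq, fun h => eq_of_le_of_finrank_eq h (by rw [finrank_span, hS])⟩

variable [Fintype F] [FiniteDimensional F V]

lemma card_span_le (S : Submodule F V) (hk₁ : k₁ ≤ finrank F ↥(S ⊓ W))
    (hr : r ≤ finrank F S - finrank F ↥(S ⊓ W)) :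
    Nat.card {p : Frame W k₁ r // p.span ≤ S} =
      frameCount (Fintype.card F) (finrank F ↥(S ⊓ W)) k₁ *
        ((Fintype.card F ^ finrank F ↥(S ⊓ W)) ^ r *
          frameCount (Fintype.card F) (finrank F S - finrank F ↥(S ⊓ W)) r) := by
  rw [← card_linearIndependent_mem _ hk₁, ← card_linearIndependent_mkQ W S hr, ← Nat.card_prod]
  exact Nat.card_congr
    { toFun := fun p => (⟨p.1.1.1, fun i => ⟨(span_le_iff.mp p.2).1 i, p.1.1.2.1 i⟩, p.1.1.2.2⟩,
        ⟨p.1.2.1, (span_le_iff.mp p.2).2, p.1.2.2⟩)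
      invFun := fun fg => ⟨(⟨fg.1.1, fun i => (fg.1.2.1 i).2, fg.1.2.2⟩, ⟨fg.2.1, fg.2.2.2⟩),
        span_le_iff.mpr ⟨fun i => (fg.1.2.1 i).1, fg.2.2.1⟩⟩
      left_inv := fun _ => rfl
      right_inv := fun _ => rfl }

end Frame

variable [Fintype F] [FiniteDimensional F V]

lemma ncard_subspacesOfType_mul (W P : Submodule F V) {k₁ r : ℕ}
    (hk₁ : k₁ ≤ finrank F ↥(P ⊓ W)) (hr : r ≤ finrank F P - finrank F ↥(P ⊓ W)) :
    (subspacesOfType W P (k₁ + r) k₁).ncard *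
        (frameCount (Fintype.card F) k₁ k₁ *
          ((Fintype.card F ^ k₁) ^ r * frameCount (Fintype.card F) r r)) =
      frameCount (Fintype.card F) (finrank F ↥(P ⊓ W)) k₁ *
        ((Fintype.card F ^ finrank F ↥(P ⊓ W)) ^ r *
          frameCount (Fintype.card F) (finrank F P - finrank F ↥(P ⊓ W)) r) := by
  classical
  have : Finite V := Module.finite_of_finite F
  let T := subspacesOfType W P (k₁ + r) k₁
  have : Fintype T := Fintype.ofFinite T
  -- group the frames spanning into `P` according to the subspace they span
  let e : {p : Frame W k₁ r // p.span ≤ P} ≃ Σ S : T, {p : Frame W k₁ r // p.span ≤ S} :=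
    (Equiv.sigmaFiberEquiv fun p : {p : Frame W k₁ r // p.span ≤ P} =>
      (⟨p.1.span, Frame.span_mem_subspacesOfType p.2⟩ : T)).symm.trans <|
      Equiv.sigmaCongrRight fun S =>
        ((Equiv.subtypeEquivRight fun p => (Subtype.ext_iff : _ ↔ p.1.span = S.1)).trans
          (Equiv.subtypeSubtypeEquivSubtype (p := fun p : Frame W k₁ r => p.span ≤ P)
            (q := fun p => p.span = S.1) fun h => h ▸ S.2.1)).trans
          (Equiv.subtypeEquivRight fun _ => Frame.span_eq_iff_le S.2.2.1)
  have hfiber (S : T) : Nat.card {p : Frame W k₁ r // p.span ≤ S} =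
      frameCount (Fintype.card F) k₁ k₁ *
        ((Fintype.card F ^ k₁) ^ r * frameCount (Fintype.card F) r r) := by
    have h := Frame.card_span_le (W := W) (k₁ := k₁) (r := r) S.1 S.2.2.2.ge
      (by rw [S.2.2.1, S.2.2.2]; omega)
    rwa [S.2.2.1, S.2.2.2, Nat.add_sub_cancel_left] at h
  rw [← Frame.card_span_le P hk₁ hr, Nat.card_congr e, Nat.card_sigma,
    Finset.sum_congr rfl fun S _ => hfiber S, Finset.sum_const, Finset.card_univ, smul_eq_mul,
    ← Nat.card_eq_fintype_card (α := T), Nat.card_coe_set_eq]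

lemma ncard_subspacesOfType_pos {W P : Submodule F V} {k₁ r : ℕ}
    (hk₁ : k₁ ≤ finrank F ↥(P ⊓ W)) (hr : r ≤ finrank F P - finrank F ↥(P ⊓ W)) :
    0 < (subspacesOfType W P (k₁ + r) k₁).ncard := by
  have hq : 1 < Fintype.card F := Fintype.one_lt_card
  refine Nat.pos_of_ne_zero fun h0 => ?_
  have h := ncard_subspacesOfType_mul W P hk₁ hr
  rw [h0, zero_mul] at h
  exact (Nat.mul_pos (frameCount_pos hq hk₁)
    (Nat.mul_pos (by positivity) (frameCount_pos hq hr))).ne' h.symm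

lemma ncard_subspacesOfType_eq {W P : Submodule F V} {k₁ r : ℕ}
    (hk₁ : k₁ ≤ finrank F ↥(P ⊓ W)) (hr : r ≤ finrank F P - finrank F ↥(P ⊓ W)) :
    ((subspacesOfType W P (k₁ + r) k₁).ncard : ℚ) =
      (Fintype.card F : ℚ) ^ (r * (finrank F ↥(P ⊓ W) - k₁)) *
        gaussBinom (Fintype.card F) (finrank F P - finrank F ↥(P ⊓ W)) r *
        gaussBinom (Fintype.card F) (finrank F ↥(P ⊓ W)) k₁ := by
  set q := Fintype.card F
  have hq : 1 < q := Fintype.one_lt_card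
  have hcount := congrArg (Nat.cast : ℕ → ℚ) (ncard_subspacesOfType_mul W P hk₁ hr)
  have hpow : ((q : ℚ) ^ finrank F ↥(P ⊓ W)) ^ r =
      (q : ℚ) ^ (r * (finrank F ↥(P ⊓ W) - k₁)) * ((q : ℚ) ^ k₁) ^ r := by
    rw [← pow_mul, ← pow_mul, ← pow_add]
    congr 1
    zify [hk₁]
    ring
  push_cast at hcount
  rw [frameCount_eq_gaussBinom_mul hq hk₁, frameCount_eq_gaussBinom_mul hq hr, hpow] at hcount
  have hne : ((frameCount q k₁ k₁ * ((q ^ k₁) ^ r * frameCount q r r) : ℕ) : ℚ) ≠ 0 := by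
    exact_mod_cast (Nat.mul_pos (frameCount_pos hq le_rfl)
      (Nat.mul_pos (by positivity) (frameCount_pos hq le_rfl))).ne'
  refine mul_right_cancel₀ hne ?_
  push_cast
  rw [hcount]
  ring

end Subspaces

theorem stmt16_general {F V : Type*} [Field F] [Fintype F] [AddCommGroup V] [Module F V]
    [FiniteDimensional F V] {q n l m k m₁ k₁ : ℕ} (hq : Fintype.card F = q)
    (hV : finrank F V = n + l)
    (W₁ : Submodule F V) (hW₁ : finrank F ↥W₁ = l)
    (P : Submodule F V) (hP : finrank F ↥P = m) (hPk : finrank F ↥(P ⊓ W₁) = k) :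
    (0 < {S : Submodule F V | S ≤ P ∧ finrank F ↥S = m₁ ∧
            finrank F ↥(S ⊓ W₁) = k₁}.ncard ↔
        (k₁ ≤ k ∧ k ≤ l ∧ k₁ ≤ m₁ ∧ (m₁ : ℤ) - (k₁ : ℤ) ≤ (m : ℤ) - (k : ℤ) ∧
          m - k ≤ n)) ∧
      ((k₁ ≤ k ∧ k ≤ l ∧ k₁ ≤ m₁ ∧ (m₁ : ℤ) - (k₁ : ℤ) ≤ (m : ℤ) - (k : ℤ) ∧
          m - k ≤ n) →
        ({S : Submodule F V | S ≤ P ∧ finrank F ↥S = m₁ ∧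
            finrank F ↥(S ⊓ W₁) = k₁}.ncard : ℚ) =
          (q : ℚ) ^ ((m₁ - k₁) * (k - k₁)) * gaussBinom q (m - k) (m₁ - k₁) *
            gaussBinom q k k₁) := by
  change (0 < (subspacesOfType W₁ P m₁ k₁).ncard ↔ _) ∧
    (_ → ((subspacesOfType W₁ P m₁ k₁).ncard : ℚ) = _)
  have hkl : k ≤ l := hPk ▸ hW₁ ▸ Submodule.finrank_mono (inf_le_right : P ⊓ W₁ ≤ W₁)
  have hmkn : m - k ≤ n := by
    have := finrank_add_finrank_inf_le (le_top : P ≤ ⊤) W₁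
    rw [top_inf_eq, finrank_top] at this
    omega
  refine ⟨⟨fun hpos => ?_, fun ⟨hk₁, _, hk₁m₁, hr, _⟩ => ?_⟩,
    fun ⟨hk₁, _, hk₁m₁, hr, _⟩ => ?_⟩
  · obtain ⟨S, hSP, hSm, hSk⟩ := Set.nonempty_of_ncard_ne_zero hpos.ne'
    have := finrank_add_finrank_inf_le hSP W₁
    have : k₁ ≤ k := hSk ▸ hPk ▸ Submodule.finrank_mono (inf_le_inf_right W₁ hSP)
    have : k₁ ≤ m₁ := hSk ▸ hSm ▸ Submodule.finrank_mono (inf_le_left : S ⊓ W₁ ≤ S)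
    omega
  · obtain ⟨r, rfl⟩ := Nat.exists_eq_add_of_le hk₁m₁
    exact ncard_subspacesOfType_pos (hPk ▸ hk₁) (by omega)
  · obtain ⟨r, rfl⟩ := Nat.exists_eq_add_of_le hk₁m₁
    rw [ncard_subspacesOfType_eq (hPk ▸ hk₁) (by omega), hPk, hP, hq, Nat.add_sub_cancel_left]

theorem stmt16 {F V : Type*} [Field F] [Fintype F] [AddCommGroup V] [Module F V]
    [FiniteDimensional F V] {q n l m k m₁ k₁ : ℕ} (hq : Fintype.card F = q)
    (hn : 0 < n) (hV : finrank F V = n + l)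
    (W₁ : Submodule F V) (hW₁ : finrank F ↥W₁ = l)
    (P : Submodule F V) (hP : finrank F ↥P = m) (hPk : finrank F ↥(P ⊓ W₁) = k) :
    (0 < {S : Submodule F V | S ≤ P ∧ finrank F ↥S = m₁ ∧
            finrank F ↥(S ⊓ W₁) = k₁}.ncard ↔
        (k₁ ≤ k ∧ k ≤ l ∧ k₁ ≤ m₁ ∧ (m₁ : ℤ) - (k₁ : ℤ) ≤ (m : ℤ) - (k : ℤ) ∧
          m - k ≤ n)) ∧
      ((k₁ ≤ k ∧ k ≤ l ∧ k₁ ≤ m₁ ∧ (m₁ : ℤ) - (k₁ : ℤ) ≤ (m : ℤ) - (k : ℤ) ∧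
          m - k ≤ n) →
        ({S : Submodule F V | S ≤ P ∧ finrank F ↥S = m₁ ∧
            finrank F ↥(S ⊓ W₁) = k₁}.ncard : ℚ) =
          (q : ℚ) ^ ((m₁ - k₁) * (k - k₁)) * gaussBinom q (m - k) (m₁ - k₁) *
            gaussBinom q k k₁) :=
  stmt16_general hq hV W₁ hW₁ P hP hPk
end
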